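/- The infimum of v(G,w) over all instances (G,w) of the concurrent graph sharing game in which G is a tree equals 1/2. -/

import Mathlib

/-!
Formalization of the concurrent graph sharing game.

An instance is a finite connected simple graph `G` on a finite vertex type `V`
together with vertex weights `w : V → (0,1]` summing to `1`, such that no two
distinct subsets of vertices have the same total weight.

A game history is recorded as a list of the taken vertices, **most recent
first**.  The player-to-move at a history is determined by the history itself:
the first player (1st) moves when his collected weight so far is at most that
of the second player (2nd); by the distinct-subset-sums assumption a tie occurs
only at the empty history, where indeed 1st begins.  `scores w h` computes the
pair `(w(F), w(S))` of total weights collected by 1st and 2nd along a history.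

A strategy is a function from histories to the chosen next vertex; it is legal
if, whenever some legal move exists (a non-taken vertex that is adjacent to a
taken one, or any vertex at the very beginning), it produces a legal move.
`firstScore w σ τ` is the total weight collected by 1st after the complete play
(all `Fintype.card V` vertices taken) in which 1st uses `σ` and 2nd uses `τ`.

`FirstGuarantees G w c` says that 1st has a legal strategy guaranteeing that he
collects total weight at least `c` against every legal strategy of 2nd, and the
value `gameValue G w` is the supremum of all such guarantees `c`.
-/

namespace ConcurrentSharing

variable {V : Type} [Fintype V]

/-- The pair `(w(F), w(S))` of weights collected by the two players along a
history (most recent vertex first): each vertex is assigned to the player who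
was to move, namely 1st iff his score so far is at most 2nd's score. -/
noncomputable def scores (w : V → ℝ) : List V → ℝ × ℝ
  | [] => (0, 0)
  | v :: h =>
    let p := scores w h
    if p.1 ≤ p.2 then (p.1 + w v, p.2) else (p.1, p.2 + w v)

/-- `v` is a legal next move at history `h`: it is not yet taken, and it is
adjacent to some taken vertex (any vertex is legal at the start). -/
def LegalMove (G : SimpleGraph V) (h : List V) (v : V) : Prop :=
  v ∉ h ∧ (h = [] ∨ ∃ u ∈ h, G.Adj u v)

/-- A strategy (for either player) maps histories to vertices; it is legal if
it produces a legal move whenever a legal move exists. -/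
def LegalStrategy (G : SimpleGraph V) (σ : List V → V) : Prop :=
  ∀ h : List V, (∃ v, LegalMove G h v) → LegalMove G h (σ h)

/-- The history after `n` rounds when 1st plays `σ` and 2nd plays `τ`
(the player to move is the one whose collected weight so far is smaller;
at the start, i.e. on a tie, 1st moves). -/
noncomputable def playAux (w : V → ℝ) (σ τ : List V → V) : ℕ → List V
  | 0 => []
  | n + 1 =>
    let h := playAux w σ τ n
    (if (scores w h).1 ≤ (scores w h).2 then σ h else τ h) :: h

/-- The total weight `w(F)` collected by 1st at the end of the complete play
(all vertices taken) in which 1st plays `σ` and 2nd plays `τ`. -/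
noncomputable def firstScore (w : V → ℝ) (σ τ : List V → V) : ℝ :=
  (scores w (playAux w σ τ (Fintype.card V))).1

/-- 1st has a legal strategy collecting total weight at least `c` against
every legal strategy of 2nd. -/
def FirstGuarantees (G : SimpleGraph V) (w : V → ℝ) (c : ℝ) : Prop :=
  ∃ σ : List V → V, LegalStrategy G σ ∧
    ∀ τ : List V → V, LegalStrategy G τ → c ≤ firstScore w σ τ

/-- The value `v(G,w)`: the maximum total weight 1st can guarantee. -/
noncomputable def gameValue (G : SimpleGraph V) (w : V → ℝ) : ℝ :=
  sSup {c : ℝ | FirstGuarantees G w c}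

/-- `(G, w)` is an instance of the concurrent graph sharing game: `G` is
connected, the weights lie in `(0,1]` and sum to `1`, and no two distinct
subsets of vertices have the same total weight. -/
def IsGameInstance (G : SimpleGraph V) (w : V → ℝ) : Prop :=
  G.Connected ∧ (∀ v : V, 0 < w v ∧ w v ≤ 1) ∧ (∑ v : V, w v) = 1 ∧
    ∀ A B : Finset V, A ≠ B → ∑ a ∈ A, w a ≠ ∑ b ∈ B, w b

end ConcurrentSharing

/-!
Strategy stealing. Call a position won for the player to move if that player can force finishing
with strictly more weight than the other. Suppose the opening position of a tree were lost for
1st. Then every opening vertex `v` has a winning reply `f v` adjacent to `v`. A tree has fewer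
edges than vertices, so some edge is chosen twice: `u = f v` and `v = f u`. Both orders of taking
`u` and `v` reach the same taken set with the player to move behind by `|w u - w v|`, and this
position would be won (1st took the heavier vertex, 2nd is to move) and lost (1st took the
lighter one, 1st is to move) at once. So 1st wins every tree, i.e. gets more than `1/2`.
Conversely, on a single edge with weights `1/2 ± ε` 2nd always gets the other vertex, so the
value there is at most `1/2 + ε`.
-/

namespace SimpleGraph

variable {V : Type} [Fintype V] {G : SimpleGraph V} [Fintype G.edgeSet]

theorem exists_ne_swap_of_card_edgeFinset_lt (hcard : G.edgeFinset.card < Fintype.card V)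
    (f : V → V) (hf : ∀ v, G.Adj v (f v)) : ∃ u v, u ≠ v ∧ f u = v ∧ f v = u := by
  obtain ⟨u, -, v, -, huv, hedge⟩ := Finset.exists_ne_map_eq_of_card_lt_of_maps_to
    (s := Finset.univ) (f := fun v ↦ s(v, f v)) hcard
    fun v _ ↦ mem_edgeFinset.mpr (hf v)
  rcases Sym2.eq_iff.mp hedge with ⟨h, -⟩ | ⟨hu, hv⟩
  · exact absurd h huv
  · exact ⟨u, v, huv, hv, hu.symm⟩

end SimpleGraph

namespace ConcurrentSharing

open Finset

variable {V : Type} {G : SimpleGraph V} {w : V → ℝ}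

theorem scores_cons_of_le {h : List V} (hle : (scores w h).1 ≤ (scores w h).2) (v : V) :
    scores w (v :: h) = ((scores w h).1 + w v, (scores w h).2) := by
  simp [scores, hle]

theorem scores_cons_of_lt {h : List V} (hlt : (scores w h).2 < (scores w h).1) (v : V) :
    scores w (v :: h) = ((scores w h).1, (scores w h).2 + w v) := by
  simp [scores, hlt.not_ge]

theorem scores_snd_nonneg (hw : ∀ v, 0 ≤ w v) (h : List V) : 0 ≤ (scores w h).2 := by
  induction h with
  | nil => simp [scores]
  | cons v h ih =>
    rcases le_or_gt (scores w h).1 (scores w h).2 with hle | hlt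
    · rwa [scores_cons_of_le hle]
    · rw [scores_cons_of_lt hlt]; exact add_nonneg ih (hw v)

theorem exists_legalMove (hconn : G.Connected) {h : List V} {b : V} (hb : b ∉ h) :
    ∃ v, LegalMove G h v := by
  cases h with
  | nil => exact ⟨b, List.not_mem_nil, Or.inl rfl⟩
  | cons a h =>
    obtain ⟨d, -, hd, hd'⟩ :=
      (hconn.preconnected a b).some.exists_boundary_dart {x | x ∈ a :: h} (by simp) hb
    exact ⟨d.snd, hd', Or.inr ⟨d.fst, hd, d.adj⟩⟩

theorem length_playAux (σ τ : List V → V) (n : ℕ) : (playAux w σ τ n).length = n := by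
  induction n with
  | zero => rfl
  | succ n ih => simp [playAux, ih]

def LegalMoveFinset (G : SimpleGraph V) (A : Finset V) (v : V) : Prop :=
  v ∉ A ∧ (A = ∅ ∨ ∃ u ∈ A, G.Adj u v)

variable [DecidableEq V]

theorem exists_partition_scores (w : V → ℝ) {h : List V} (hnd : h.Nodup) :
    ∃ F S : Finset V, Disjoint F S ∧ F ∪ S = h.toFinset ∧
      (scores w h).1 = ∑ x ∈ F, w x ∧ (scores w h).2 = ∑ x ∈ S, w x := by
  induction h with
  | nil => exact ⟨∅, ∅, by simp, by simp, by simp [scores], by simp [scores]⟩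
  | cons v h ih =>
    obtain ⟨hv, hnd⟩ := List.nodup_cons.mp hnd
    obtain ⟨F, S, hdisj, hunion, hF, hS⟩ := ih hnd
    have hvFS : v ∉ F ∪ S := by simpa [hunion] using hv
    rw [mem_union, not_or] at hvFS
    rcases le_or_gt (scores w h).1 (scores w h).2 with hle | hlt
    · refine ⟨insert v F, S, disjoint_insert_left.mpr ⟨hvFS.2, hdisj⟩, ?_, ?_, ?_⟩
      · rw [insert_union, hunion, List.toFinset_cons]
      · rw [scores_cons_of_le hle, sum_insert hvFS.1, hF, add_comm]
      · rw [scores_cons_of_le hle, hS]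
    · refine ⟨F, insert v S, disjoint_insert_right.mpr ⟨hvFS.1, hdisj⟩, ?_, ?_, ?_⟩
      · rw [union_insert, hunion, List.toFinset_cons]
      · rw [scores_cons_of_lt hlt, hF]
      · rw [scores_cons_of_lt hlt, sum_insert hvFS.2, hS, add_comm]

theorem scores_fst_ne_snd_add (hdist : ∀ A B : Finset V, A ≠ B → ∑ a ∈ A, w a ≠ ∑ b ∈ B, w b)
    {h : List V} (hnd : h.Nodup) {v : V} (hv : v ∉ h) :
    (scores w h).1 ≠ (scores w h).2 + w v := by
  obtain ⟨F, S, -, hunion, hF, hS⟩ := exists_partition_scores w hnd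
  have hvFS : v ∉ F ∪ S := by simpa [hunion] using hv
  rw [mem_union, not_or] at hvFS
  have hne : F ≠ insert v S := fun h ↦ hvFS.1 (h ▸ mem_insert_self v S)
  rw [hF, hS, add_comm, ← sum_insert hvFS.2]
  exact hdist F _ hne

theorem legalMoveFinset_toFinset_iff {h : List V} {v : V} :
    LegalMoveFinset G h.toFinset v ↔ LegalMove G h v := by
  simp [LegalMoveFinset, LegalMove, List.toFinset_eq_empty_iff]

/- `d` is the deficit of the player to move. A move creating a tie counts as losing: with
distinct subset sums no tie arises after the first move. -/
def IsWinningMove (w : V → ℝ) (win : Finset V → ℝ → Prop) (A : Finset V) (d : ℝ) (v : V) :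
    Prop :=
  (d < w v ∧ ¬ win (insert v A) (w v - d)) ∨ (w v < d ∧ win (insert v A) (d - w v))

/-- `MoverWins G w k A d`: with the vertices of `A` taken, `k` rounds left, and the player to
move behind by `d`, the player to move can force finishing strictly ahead. -/
def MoverWins (G : SimpleGraph V) (w : V → ℝ) : ℕ → Finset V → ℝ → Prop
  | 0, _, _ => False
  | k + 1, A, d => ∃ v, LegalMoveFinset G A v ∧ IsWinningMove w (MoverWins G w k) A d v

variable [Fintype V]

theorem exists_legalMove_playAux (hconn : G.Connected) {σ τ : List V → V} {n : ℕ}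
    (hnd : (playAux w σ τ n).Nodup) (hn : n < Fintype.card V) :
    ∃ v, LegalMove G (playAux w σ τ n) v := by
  have hcard : (playAux w σ τ n).toFinset.card < Fintype.card V := by
    rwa [List.toFinset_card_of_nodup hnd, length_playAux]
  obtain ⟨b, -, hb⟩ := exists_mem_notMem_of_card_lt_card (t := univ)
    (s := (playAux w σ τ n).toFinset) (by rwa [card_univ])
  exact exists_legalMove hconn (List.mem_toFinset.not.mp hb)

theorem nodup_playAux (hconn : G.Connected) {σ τ : List V → V} (hσ : LegalStrategy G σ)
    (hτ : LegalStrategy G τ) {n : ℕ} (hn : n ≤ Fintype.card V) : (playAux w σ τ n).Nodup := by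
  induction n with
  | zero => exact List.nodup_nil
  | succ n ih =>
    have hnd := ih (Nat.le_of_succ_le hn)
    have hex := exists_legalMove_playAux hconn hnd hn
    rw [playAux]
    split
    · exact List.nodup_cons.mpr ⟨(hσ _ hex).1, hnd⟩
    · exact List.nodup_cons.mpr ⟨(hτ _ hex).1, hnd⟩

theorem scores_fst_add_snd_playAux_card (w : V → ℝ) (hconn : G.Connected) {σ τ : List V → V}
    (hσ : LegalStrategy G σ) (hτ : LegalStrategy G τ) :
    (scores w (playAux w σ τ (Fintype.card V))).1 +
      (scores w (playAux w σ τ (Fintype.card V))).2 = ∑ v, w v := by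
  have hnd := nodup_playAux (w := w) hconn hσ hτ le_rfl
  obtain ⟨F, S, hdisj, hunion, hF, hS⟩ := exists_partition_scores w hnd
  have huniv : (playAux w σ τ (Fintype.card V)).toFinset = univ :=
    eq_univ_of_card _ (by rw [List.toFinset_card_of_nodup hnd, length_playAux])
  rw [hF, hS, ← sum_union hdisj, hunion, huniv]

theorem firstScore_le_one (hinst : IsGameInstance G w) {σ τ : List V → V}
    (hσ : LegalStrategy G σ) (hτ : LegalStrategy G τ) : firstScore w σ τ ≤ 1 := by
  obtain ⟨hconn, hw, hsum, -⟩ := hinst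
  have htotal := scores_fst_add_snd_playAux_card w hconn hσ hτ
  have hsnd := scores_snd_nonneg (fun v ↦ (hw v).1.le) (playAux w σ τ (Fintype.card V))
  rw [firstScore]
  linarith

theorem moverWins_empty_of_isTree (htree : G.IsTree) (hpos : ∀ v, 0 < w v)
    (hinj : Function.Injective w) : MoverWins G w (Fintype.card V) ∅ 0 := by
  classical
  obtain ⟨k, hk⟩ : ∃ k, Fintype.card V = k + 1 :=
    Nat.exists_eq_add_one.mpr (Fintype.card_pos_iff.mpr htree.connected.nonempty)
  rw [hk]
  by_contra hlose
  have hreply : ∀ v, MoverWins G w k {v} (w v) := fun v ↦ by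
    by_contra hv
    exact hlose ⟨v, ⟨notMem_empty v, Or.inl rfl⟩, Or.inl ⟨hpos v, by simpa using hv⟩⟩
  cases k with
  | zero => exact hreply htree.connected.nonempty.some
  | succ m =>
    have hadjReply : ∀ v, ∃ x, G.Adj v x ∧ IsWinningMove w (MoverWins G w m) {v} (w v) x := by
      intro v
      obtain ⟨x, ⟨-, hstart | ⟨u, hu, hux⟩⟩, hx⟩ := hreply v
      · exact absurd hstart (singleton_ne_empty v)
      · exact ⟨x, mem_singleton.mp hu ▸ hux, hx⟩
    choose f hadj hf using hadjReply
    have hcard : G.edgeFinset.card < Fintype.card V := by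
      have := htree.card_edgeFinset; omega
    obtain ⟨u, v, huv, hfu, hfv⟩ := G.exists_ne_swap_of_card_edgeFinset_lt hcard f hadj
    wlog hlt : w u < w v generalizing u v
    · exact this v u huv.symm hfv hfu ((hinj.ne huv).lt_or_gt.resolve_left hlt)
    have hwin := hf v
    have hnotWin := hf u
    rw [hfv] at hwin
    rw [hfu] at hnotWin
    rcases hwin with ⟨hgt, -⟩ | ⟨-, hwin⟩
    · exact absurd hgt hlt.not_gt
    rcases hnotWin with ⟨-, hnotWin⟩ | ⟨hgt, -⟩
    · exact hnotWin (pair_comm v u ▸ hwin)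
    · exact absurd hgt hlt.not_gt

/- `|s₁ - s₂|` is the deficit of the player to move, who is 1st iff `s₁ ≤ s₂`: the player to move
wins iff it is 1st. -/
def FirstWinning (G : SimpleGraph V) (w : V → ℝ) (h : List V) : Prop :=
  MoverWins G w (Fintype.card V - h.length) h.toFinset |(scores w h).1 - (scores w h).2| ↔
    (scores w h).1 ≤ (scores w h).2

def IsWinningMoveAt (G : SimpleGraph V) (w : V → ℝ) (h : List V) (v : V) : Prop :=
  IsWinningMove w (MoverWins G w (Fintype.card V - (h.length + 1))) h.toFinset
    |(scores w h).1 - (scores w h).2| v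

theorem firstWinning_cons_of_isWinningMoveAt {h : List V} {v : V}
    (hle : (scores w h).1 ≤ (scores w h).2) (hwin : IsWinningMoveAt G w h v) :
    FirstWinning G w (v :: h) := by
  rw [FirstWinning, scores_cons_of_le hle, List.length_cons, List.toFinset_cons]
  rw [IsWinningMoveAt, abs_of_nonpos (sub_nonpos.mpr hle)] at hwin
  rcases hwin with ⟨hlt, hlose⟩ | ⟨hlt, hwin⟩
  · rw [abs_of_pos (by linarith)]
    exact iff_of_false (by convert hlose using 2; ring) (by linarith)
  · rw [abs_of_neg (by linarith)]
    exact iff_of_true (by convert hwin using 2; ring) (by linarith)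

theorem firstWinning_cons_of_lt
    (hdist : ∀ A B : Finset V, A ≠ B → ∑ a ∈ A, w a ≠ ∑ b ∈ B, w b)
    {h : List V} (hnd : h.Nodup) {v : V} (hv : v ∉ h) (hlt : (scores w h).2 < (scores w h).1)
    (hnotWin : ¬ IsWinningMoveAt G w h v) :
    FirstWinning G w (v :: h) := by
  rw [FirstWinning, scores_cons_of_lt hlt, List.length_cons, List.toFinset_cons]
  rw [IsWinningMoveAt, abs_of_pos (sub_pos.mpr hlt), IsWinningMove, not_or, not_and, not_and,
    not_not] at hnotWin
  have hne := scores_fst_ne_snd_add hdist hnd hv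
  rcases lt_trichotomy (w v) ((scores w h).1 - (scores w h).2) with hgt | heq | hgt
  · rw [abs_of_pos (by linarith)]
    exact iff_of_false (by convert hnotWin.2 hgt using 2; ring) (by linarith)
  · exact absurd (by linarith) hne
  · rw [abs_of_neg (by linarith)]
    exact iff_of_true (by convert hnotWin.1 hgt using 2; ring) (by linarith)

open Classical in
noncomputable def firstStrategy (G : SimpleGraph V) (w : V → ℝ) [Nonempty V] : List V → V :=
  fun h ↦
    if hwin : ∃ v, LegalMove G h v ∧ IsWinningMoveAt G w h v then hwin.choose
    else if hlegal : ∃ v, LegalMove G h v then hlegal.choose else Classical.arbitrary V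

theorem legalStrategy_firstStrategy (G : SimpleGraph V) (w : V → ℝ) [Nonempty V] :
    LegalStrategy G (firstStrategy G w) := by
  intro h hlegal
  rw [firstStrategy]
  split_ifs with hwin
  · exact hwin.choose_spec.1
  · exact hlegal.choose_spec

theorem isWinningMoveAt_firstStrategy [Nonempty V] {h : List V}
    (hwin : ∃ v, LegalMove G h v ∧ IsWinningMoveAt G w h v) :
    IsWinningMoveAt G w h (firstStrategy G w h) := by
  rw [firstStrategy, dif_pos hwin]
  exact hwin.choose_spec.2

theorem firstWinning_playAux [Nonempty V] (htree : G.IsTree) (hpos : ∀ v, 0 < w v)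
    (hdist : ∀ A B : Finset V, A ≠ B → ∑ a ∈ A, w a ≠ ∑ b ∈ B, w b)
    {τ : List V → V} (hτ : LegalStrategy G τ) {n : ℕ} (hn : n ≤ Fintype.card V) :
    FirstWinning G w (playAux w (firstStrategy G w) τ n) := by
  induction n with
  | zero =>
    have hinj : Function.Injective w := fun u v huv ↦
      singleton_inj.mp (not_imp_comm.mp (hdist {u} {v}) (by simpa using huv))
    show FirstWinning G w []
    simpa [FirstWinning, scores] using moverWins_empty_of_isTree htree hpos hinj
  | succ n ih =>
    set h := playAux w (firstStrategy G w) τ n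
    have hfirst := ih (Nat.le_of_succ_le hn)
    have hnd : h.Nodup :=
      nodup_playAux htree.connected (legalStrategy_firstStrategy G w) hτ (Nat.le_of_succ_le hn)
    have hfuel : Fintype.card V - h.length = Fintype.card V - (h.length + 1) + 1 := by
      rw [length_playAux]; omega
    rw [FirstWinning, hfuel] at hfirst
    rw [playAux]
    split_ifs with hle
    · obtain ⟨v, hv, hwin⟩ := hfirst.mpr hle
      exact firstWinning_cons_of_isWinningMoveAt hle <| isWinningMoveAt_firstStrategy
        ⟨v, legalMoveFinset_toFinset_iff.mp hv, hwin⟩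
    · have hlegal := hτ h (exists_legalMove_playAux htree.connected hnd hn)
      exact firstWinning_cons_of_lt hdist hnd hlegal.1 (not_le.mp hle)
        fun hwin ↦ hle (hfirst.mp ⟨_, legalMoveFinset_toFinset_iff.mpr hlegal, hwin⟩)

theorem half_lt_firstScore_firstStrategy [Nonempty V] (hinst : IsGameInstance G w)
    (htree : G.IsTree) {τ : List V → V} (hτ : LegalStrategy G τ) :
    1 / 2 < firstScore w (firstStrategy G w) τ := by
  obtain ⟨-, hw, hsum, hdist⟩ := hinst
  have hfirst := firstWinning_playAux htree (fun v ↦ (hw v).1) hdist hτ le_rfl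
  rw [FirstWinning, length_playAux, Nat.sub_self, MoverWins, false_iff, not_le] at hfirst
  have htotal := scores_fst_add_snd_playAux_card w htree.connected
    (legalStrategy_firstStrategy G w) hτ
  rw [hsum] at htotal
  rw [firstScore]
  linarith

theorem half_le_gameValue (hinst : IsGameInstance G w) (htree : G.IsTree) :
    1 / 2 ≤ gameValue G w := by
  have : Nonempty V := htree.connected.nonempty
  refine le_csSup ⟨1, ?_⟩ ⟨firstStrategy G w, legalStrategy_firstStrategy G w,
    fun τ hτ ↦ (half_lt_firstScore_firstStrategy hinst htree hτ).le⟩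
  rintro c ⟨σ, hσ, hc⟩
  exact (hc _ (legalStrategy_firstStrategy G w)).trans
    (firstScore_le_one hinst hσ (legalStrategy_firstStrategy G w))

theorem isTree_top_fin_two : (⊤ : SimpleGraph (Fin 2)).IsTree :=
  ⟨SimpleGraph.connected_top, SimpleGraph.IsAcyclic.of_card_le_two (by simp)⟩

theorem firstScore_top_fin_two {w : Fin 2 → ℝ} {σ τ : List (Fin 2) → Fin 2}
    (hpos : 0 < w (σ [])) : firstScore w σ τ = w (σ []) := by
  simp [firstScore, playAux, scores, hpos.not_ge]

noncomputable def twoWeights (ε : ℝ) : Fin 2 → ℝ := ![1 / 2 + ε, 1 / 2 - ε]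

theorem isGameInstance_twoWeights {ε : ℝ} (hε : 0 < ε) (hε' : ε < 1 / 2) :
    IsGameInstance ⊤ (twoWeights ε) := by
  have hcases (A : Finset (Fin 2)) : A = ∅ ∨ A = {0} ∨ A = {1} ∨ A = univ := by
    revert A; decide
  refine ⟨SimpleGraph.connected_top, ?_, ?_, ?_⟩
  · intro v; fin_cases v <;> simp [twoWeights] <;> constructor <;> linarith
  · simp [twoWeights, Fin.sum_univ_two]; ring
  · intro A B hAB
    rcases hcases A with rfl | rfl | rfl | rfl <;> rcases hcases B with rfl | rfl | rfl | rfl <;>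
      simp_all [twoWeights, Fin.sum_univ_two] <;> linarith

theorem gameValue_twoWeights_le {ε : ℝ} (hε : 0 < ε) (hε' : ε < 1 / 2) :
    gameValue ⊤ (twoWeights ε) ≤ 1 / 2 + ε := by
  have hinst := isGameInstance_twoWeights hε hε'
  refine csSup_le ⟨_, firstStrategy ⊤ _, legalStrategy_firstStrategy ⊤ _,
    fun τ hτ ↦ (half_lt_firstScore_firstStrategy hinst isTree_top_fin_two hτ).le⟩ ?_
  rintro c ⟨σ, -, hc⟩
  have hle := hc _ (legalStrategy_firstStrategy ⊤ (twoWeights ε))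
  rw [firstScore_top_fin_two (hinst.2.1 _).1] at hle
  refine hle.trans ?_
  generalize σ [] = v
  fin_cases v <;> simp [twoWeights]
  linarith

end ConcurrentSharing

open ConcurrentSharing in
/-- The infimum of `v(G,w)` over all instances `(G,w)` of the
concurrent graph sharing game in which `G` is a tree equals `1/2`. -/
theorem inf_tree_gameValue_eq_one_half :
    sInf {r : ℝ | ∃ (n : ℕ) (G : SimpleGraph (Fin n)) (w : Fin n → ℝ),
        IsGameInstance G w ∧ G.IsTree ∧ r = gameValue G w} = 1 / 2 := by
  refine csInf_eq_of_forall_ge_of_forall_gt_exists_lt ⟨_, 2, ⊤, twoWeights (1 / 4),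
    isGameInstance_twoWeights (by norm_num) (by norm_num), isTree_top_fin_two, rfl⟩ ?_ ?_
  · rintro _ ⟨n, G, w, hinst, htree, rfl⟩
    exact half_le_gameValue hinst htree
  · intro c hc
    obtain ⟨ε, hε, hεc⟩ := exists_between (lt_min (sub_pos.mpr hc) (one_half_pos (α := ℝ)))
    obtain ⟨hεc, hε'⟩ := lt_min_iff.mp hεc
    exact ⟨_, ⟨2, ⊤, twoWeights ε, isGameInstance_twoWeights hε hε', isTree_top_fin_two, rfl⟩,
      (gameValue_twoWeights_le hε hε').trans_lt (by linarith)⟩
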